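/- arXiv:1809.05696 — 4 statements merged into one kernel-verified Lean document; each statement's English description precedes it below -/
import Mathlib

section
/- Let w : ℝ → (0,∞) be a continuous 2π-periodic function that is angle-separable and satisfies max w > min w (w is nonconstant). Then there exists α₀ ∈ ℝ such that w(α₀) = max_{t∈ℝ} w(t) and w(α₀ + π) = min_{t∈ℝ} w(t); that is, w attains its maximum and minimum at a pair of antipodal angles. -/
/-!
The angles across which `w` rises, resp. falls, form two closed sets covering `ℝ`, neither empty
since `w` is not constant; by connectedness some `α` lies in both, i.e. `w` is symmetric about `α`.
Two axes of symmetry at distance `d ∈ (0, π)` make `2d` and `2π - 2d` periods, one of them at most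
`π`, and a period `P ≤ π` is incompatible with angle separability. So `(α, α + π)` contains no
further axis and, by connectedness again, `w` rises across all of its points or falls across all of
them. Then `w` is monotone on `[α, α + π]`, and by symmetry its extrema sit at `α` and `α + π`.
-/

open Real Set Function

def RisesAcross (w : ℝ → ℝ) (α : ℝ) : Prop :=
  ∀ θ ∈ Ioo 0 π, w (α - θ) ≤ w (α + θ)

/-- `RisesAcross (-w) α` says that `w` falls across `α`. -/
def AngleSeparable (w : ℝ → ℝ) : Prop :=
  ∀ α, RisesAcross w α ∨ RisesAcross (-w) α

def IsSymmetricAbout (w : ℝ → ℝ) (α : ℝ) : Prop :=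
  ∀ s, w (α + s) = w (α - s)

section

variable {w : ℝ → ℝ}

lemma isClosed_setOf_risesAcross (hcont : Continuous w) : IsClosed {α | RisesAcross w α} := by
  simp only [RisesAcross, ofPred_forall]
  exact isClosed_biInter fun θ _ => isClosed_le (by fun_prop) (by fun_prop)

lemma AngleSeparable.neg (hsep : AngleSeparable w) : AngleSeparable (-w) := by
  simpa only [AngleSeparable, neg_neg, or_comm] using hsep

lemma IsSymmetricAbout.neg {α : ℝ} (h : IsSymmetricAbout w α) : IsSymmetricAbout (-w) α :=
  fun s => congrArg Neg.neg (h s)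

lemma Function.Periodic.exists_mem_Ioo_eq_add {P s t : ℝ} (hw : Periodic w P) (hP : 0 < P)
    (hst : w s < w t) : ∃ c ∈ Ioo 0 P, w t = w (s + c) := by
  obtain ⟨c, ⟨hc0, hcP⟩, hc⟩ := (hw.const_add s).exists_mem_Ico₀ hP (t - s)
  simp only [add_sub_cancel] at hc
  refine ⟨c, ⟨hc0.lt_of_ne ?_, hcP⟩, hc⟩
  rintro rfl
  simp [hc] at hst

lemma AngleSeparable.exists_risesAcross (hsep : AngleSeparable w) (hw : Periodic w (2 * π))
    (hnc : ∃ s t, w s < w t) : ∃ α, RisesAcross w α := by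
  obtain ⟨s, t, hst⟩ := hnc
  obtain ⟨c, ⟨hc0, hcπ⟩, hc⟩ := hw.exists_mem_Ioo_eq_add two_pi_pos hst
  refine ⟨s + c / 2, (hsep _).resolve_right fun hfall => ?_⟩
  have := hfall (c / 2) ⟨by linarith, by linarith⟩
  simp only [Pi.neg_apply, neg_le_neg_iff, add_sub_cancel_right, add_assoc, add_halves] at this
  linarith

/-- Reflections across `s + c / 2` compare `w s` with `w (s + c)`, and, through the period,
`w (s + c)` with `w (s + P)`; with `P ≤ π` both reflections are admissible. -/
lemma AngleSeparable.not_periodic_of_le_pi (hsep : AngleSeparable w) (hnc : ∃ s t, w s < w t)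
    {P : ℝ} (hw : Periodic w P) (hP : 0 < P) (hPπ : P ≤ π) : False := by
  obtain ⟨s, t, hst⟩ := hnc
  obtain ⟨c, ⟨hc0, hcP⟩, hc⟩ := hw.exists_mem_Ioo_eq_add hP hst
  rcases hsep (s + c / 2) with hrise | hfall
  · have := hrise (P - c / 2) ⟨by linarith, by linarith⟩
    rw [show s + c / 2 - (P - c / 2) = s + c - P by ring,
      show s + c / 2 + (P - c / 2) = s + P by ring, hw.sub_eq, hw] at this
    linarith
  · have := hfall (c / 2) ⟨by linarith, by linarith⟩
    simp only [Pi.neg_apply, neg_le_neg_iff, add_sub_cancel_right, add_assoc, add_halves] at this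
    linarith

lemma isSymmetricAbout_of_risesAcross {α : ℝ} (hw : Periodic w (2 * π))
    (hrise : RisesAcross w α) (hfall : RisesAcross (-w) α) : IsSymmetricAbout w α := by
  have hIcc : ∀ θ ∈ Icc 0 π, w (α + θ) = w (α - θ) := by
    rintro θ ⟨h0, hπ⟩
    rcases h0.eq_or_lt with rfl | h0
    · simp
    rcases hπ.eq_or_lt with hθ | hπ
    · rw [hθ, ← hw (α - π)]
      ring_nf
    exact le_antisymm (neg_le_neg_iff.mp (hfall θ ⟨h0, hπ⟩)) (hrise θ ⟨h0, hπ⟩)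
  let D s := w (α + s) - w (α - s)
  have hD : Periodic D (2 * π) := fun s => by
    simp only [D, ← add_assoc, hw _, sub_add_eq_sub_sub, hw.sub_eq]
  intro s
  obtain ⟨c, ⟨hc₁, hc₂⟩, hc⟩ := hD.exists_mem_Ico two_pi_pos s (-π)
  suffices D c = 0 by simpa [D, this, sub_eq_zero] using hc
  rcases le_or_gt 0 c with hc0 | hc0
  · simp only [D, hIcc c ⟨hc0, by linarith⟩, sub_self]
  · have := hIcc (-c) ⟨by linarith, by linarith⟩
    rw [sub_neg_eq_add, ← sub_eq_add_neg] at this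
    simp only [D, this, sub_self]

lemma IsSymmetricAbout.periodic {a b : ℝ} (ha : IsSymmetricAbout w a) (hb : IsSymmetricAbout w b) :
    Periodic w (2 * (b - a)) := fun t => by
  calc w (t + 2 * (b - a)) = w (b + (t + b - 2 * a)) := by ring_nf
    _ = w (a + (a - t)) := by rw [hb]; ring_nf
    _ = w t := by rw [ha]; ring_nf

lemma AngleSeparable.not_isSymmetricAbout_of_lt (hsep : AngleSeparable w) (hw : Periodic w (2 * π))
    (hnc : ∃ s t, w s < w t) {a b : ℝ} (ha : IsSymmetricAbout w a) (hb : IsSymmetricAbout w b)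
    (hab : a < b) (hba : b < a + π) : False := by
  have hP := ha.periodic hb
  rcases le_total (2 * (b - a)) π with hπ | hπ
  · exact hsep.not_periodic_of_le_pi hnc hP (by linarith) hπ
  · exact hsep.not_periodic_of_le_pi hnc (hw.sub_period hP) (by linarith) (by linarith)

lemma AngleSeparable.exists_isSymmetricAbout_mem (hsep : AngleSeparable w) (hcont : Continuous w)
    (hw : Periodic w (2 * π)) {s : Set ℝ} (hs : IsPreconnected s) (hrise : ∃ x ∈ s, RisesAcross w x)
    (hfall : ∃ x ∈ s, RisesAcross (-w) x) : ∃ α ∈ s, IsSymmetricAbout w α := by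
  obtain ⟨α, hαs, hαrise, hαfall⟩ := isPreconnected_closed_iff.mp hs _ _
    (isClosed_setOf_risesAcross hcont) (isClosed_setOf_risesAcross hcont.neg)
    (fun x _ => hsep x) hrise hfall
  exact ⟨α, hαs, isSymmetricAbout_of_risesAcross hw hαrise hαfall⟩

lemma AngleSeparable.exists_isSymmetricAbout (hsep : AngleSeparable w) (hcont : Continuous w)
    (hw : Periodic w (2 * π)) (hnc : ∃ s t, w s < w t) : ∃ α, IsSymmetricAbout w α := by
  obtain ⟨s, t, hst⟩ := hnc
  obtain ⟨a, ha⟩ := hsep.exists_risesAcross hw ⟨s, t, hst⟩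
  obtain ⟨b, hb⟩ := hsep.neg.exists_risesAcross (hw.comp Neg.neg) ⟨t, s, neg_lt_neg hst⟩
  obtain ⟨α, -, hα⟩ := hsep.exists_isSymmetricAbout_mem hcont hw isPreconnected_univ
    ⟨a, trivial, ha⟩ ⟨b, trivial, hb⟩
  exact ⟨α, hα⟩

/-- Between an axis of symmetry `α` and its antipode there is no further axis, so the closed sets
where `w` rises, resp. falls, across a point cannot split `(α, α + π)`. -/
lemma AngleSeparable.forall_risesAcross_or (hsep : AngleSeparable w) (hcont : Continuous w)
    (hw : Periodic w (2 * π)) (hnc : ∃ s t, w s < w t) {α : ℝ} (hα : IsSymmetricAbout w α) :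
    (∀ μ ∈ Ioo α (α + π), RisesAcross w μ) ∨ (∀ μ ∈ Ioo α (α + π), RisesAcross (-w) μ) := by
  by_contra! ⟨⟨ρ₁, hρ₁, hρ₁rise⟩, ⟨ρ₂, hρ₂, hρ₂fall⟩⟩
  obtain ⟨ξ, hξ, hξsym⟩ := hsep.exists_isSymmetricAbout_mem hcont hw isPreconnected_uIcc
    ⟨ρ₂, left_mem_uIcc, (hsep ρ₂).resolve_right hρ₂fall⟩
    ⟨ρ₁, right_mem_uIcc, (hsep ρ₁).resolve_left hρ₁rise⟩
  have hξ' := ordConnected_Ioo.uIcc_subset hρ₂ hρ₁ hξ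
  exact hsep.not_isSymmetricAbout_of_lt hw hnc hα hξsym hξ'.1 hξ'.2

lemma monotoneOn_of_forall_risesAcross {α : ℝ} (h : ∀ μ ∈ Ioo α (α + π), RisesAcross w μ) :
    MonotoneOn w (Icc α (α + π)) := by
  intro x hx y hy hxy
  rcases hxy.eq_or_lt with rfl | hxy
  · rfl
  have := h ((x + y) / 2) ⟨by linarith [hx.1], by linarith [hy.2]⟩ ((y - x) / 2)
    ⟨by linarith, by linarith [hx.1, hy.2]⟩
  rwa [show (x + y) / 2 - (y - x) / 2 = x by ring, show (x + y) / 2 + (y - x) / 2 = y by ring]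
    at this

lemma IsSymmetricAbout.le_and_le_of_monotoneOn {α : ℝ} (hsym : IsSymmetricAbout w α)
    (hw : Periodic w (2 * π)) (hmono : MonotoneOn w (Icc α (α + π))) (t : ℝ) :
    w α ≤ w t ∧ w t ≤ w (α + π) := by
  have hα : α ∈ Icc α (α + π) := left_mem_Icc.mpr (by linarith [pi_pos])
  have hαπ : α + π ∈ Icc α (α + π) := right_mem_Icc.mpr (by linarith [pi_pos])
  obtain ⟨c, ⟨hc₁, hc₂⟩, hc⟩ := (hw.const_add α).exists_mem_Ico two_pi_pos (t - α) (-π)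
  simp only [add_sub_cancel] at hc
  rw [hc]
  obtain ⟨d, hd0, hdπ, hd⟩ : ∃ d, 0 ≤ d ∧ d ≤ π ∧ w (α + c) = w (α + d) := by
    rcases le_or_gt 0 c with hc0 | hc0
    · exact ⟨c, hc0, by linarith, rfl⟩
    · exact ⟨-c, by linarith, by linarith, by rw [← sub_eq_add_neg, hsym]⟩
  have hd' : α + d ∈ Icc α (α + π) := ⟨by linarith, by linarith⟩
  rw [hd]
  exact ⟨hmono hα hd' (by linarith), hmono hd' hαπ (by linarith)⟩

end

theorem stmt_0_general (w : ℝ → ℝ)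
    (hcont : Continuous w)
    (hper : ∀ t, w (t + 2 * Real.pi) = w t)
    (hsep : ∀ α : ℝ,
      (∀ θ ∈ Set.Ioo (0 : ℝ) Real.pi, w (α - θ) ≤ w (α + θ)) ∨
      (∀ θ ∈ Set.Ioo (0 : ℝ) Real.pi, w (α + θ) ≤ w (α - θ)))
    (hnc : ∃ s t : ℝ, w s < w t) :
    ∃ α₀ : ℝ, (∀ t, w t ≤ w α₀) ∧ (∀ t, w (α₀ + Real.pi) ≤ w t) := by
  have hw : Periodic w (2 * π) := hper
  have hsep : AngleSeparable w := fun α => (hsep α).imp id fun h θ hθ => neg_le_neg (h θ hθ)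
  obtain ⟨α, hα⟩ := hsep.exists_isSymmetricAbout hcont hw hnc
  rcases hsep.forall_risesAcross_or hcont hw hnc hα with hrise | hfall
  · have h := hα.le_and_le_of_monotoneOn hw (monotoneOn_of_forall_risesAcross hrise)
    have hantipode : w (α + π + π) = w α := by rw [add_assoc, ← two_mul, hw]
    exact ⟨α + π, fun t => (h t).2, fun t => hantipode ▸ (h t).1⟩
  · have h := hα.neg.le_and_le_of_monotoneOn (hw.comp Neg.neg)
      (monotoneOn_of_forall_risesAcross hfall)
    exact ⟨α, fun t => neg_le_neg_iff.mp (h t).1, fun t => neg_le_neg_iff.mp (h t).2⟩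

/-- A continuous, positive, 2π-periodic, angle-separable, nonconstant
function `w` on `ℝ` attains its maximum and minimum at a pair of antipodal angles. -/
theorem stmt_0 (w : ℝ → ℝ)
    (hpos : ∀ t, 0 < w t)
    (hcont : Continuous w)
    (hper : ∀ t, w (t + 2 * Real.pi) = w t)
    (hsep : ∀ α : ℝ,
      (∀ θ ∈ Set.Ioo (0 : ℝ) Real.pi, w (α - θ) ≤ w (α + θ)) ∨
      (∀ θ ∈ Set.Ioo (0 : ℝ) Real.pi, w (α + θ) ≤ w (α - θ)))
    (hnc : ∃ s t : ℝ, w s < w t) :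
    ∃ α₀ : ℝ, (∀ t, w t ≤ w α₀) ∧ (∀ t, w (α₀ + Real.pi) ≤ w t) :=
  stmt_0_general w hcont hper hsep hnc
end

section
/- Let w : ℝ → (0,∞) be a continuous 2π-periodic function that is angle-separable and satisfies w(α) = w(α + π) for every α ∈ ℝ. Then w is a constant function. -/
/-!
Antipodal invariance makes `w` periodic with period `π`. For a `c`-periodic function, the
inequality between `w (α - θ)` and `w (α + θ)` in one direction turns, after substituting
`θ ↦ c - θ` and shifting by `c`, into the opposite inequality, so separability forces
reflection symmetry `w (α + θ) = w (α - θ)` about every `α`. Reflecting about midpoints then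
identifies the values at any two points less than a period apart, and periodicity does the rest.
-/

open Set Function

def IsSeparableAt {β : Type*} [LinearOrder β] (f : ℝ → β) (c a : ℝ) : Prop :=
  (∀ θ ∈ Ioo 0 c, f (a - θ) ≤ f (a + θ)) ∨ (∀ θ ∈ Ioo 0 c, f (a + θ) ≤ f (a - θ))

theorem Function.Periodic.reflect_eq_of_isSeparableAt {β : Type*} [LinearOrder β] {f : ℝ → β}
    {c a : ℝ} (hf : Periodic f c) (hsep : IsSeparableAt f c a) {θ : ℝ} (hθ : θ ∈ Ioo 0 c) :
    f (a + θ) = f (a - θ) := by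
  have hθ' : c - θ ∈ Ioo 0 c := ⟨by linarith [hθ.2], by linarith [hθ.1]⟩
  have h_plus : f (a + θ) = f (a - (c - θ)) := by
    rw [← hf (a - (c - θ))]
    ring_nf
  have h_minus : f (a - θ) = f (a + (c - θ)) := by
    rw [← hf (a - θ)]
    ring_nf
  rcases hsep with h | h
  · refine le_antisymm ?_ (h θ hθ)
    rw [h_plus, h_minus]
    exact h _ hθ'
  · refine le_antisymm (h θ hθ) ?_
    rw [h_plus, h_minus]
    exact h _ hθ'

theorem Function.Periodic.eq_of_forall_reflect_eq {β : Type*} {f : ℝ → β} {c : ℝ}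
    (hf : Periodic f c) (hc : 0 < c)
    (hrefl : ∀ a, ∀ θ ∈ Ioo 0 c, f (a + θ) = f (a - θ)) (s t : ℝ) : f s = f t := by
  obtain ⟨y, ⟨hsy, hyc⟩, hty⟩ := hf.exists_mem_Ico hc t s
  rw [hty]
  rcases hsy.eq_or_lt with rfl | hsy
  · rfl
  have hmid := hrefl ((s + y) / 2) ((y - s) / 2) ⟨by linarith, by linarith⟩
  rw [show (s + y) / 2 + (y - s) / 2 = y by ring, show (s + y) / 2 - (y - s) / 2 = s by ring]
    at hmid
  exact hmid.symm

theorem stmt_4_general (w : ℝ → ℝ)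
    (hsep : ∀ α : ℝ,
      (∀ θ ∈ Set.Ioo (0 : ℝ) Real.pi, w (α - θ) ≤ w (α + θ)) ∨
      (∀ θ ∈ Set.Ioo (0 : ℝ) Real.pi, w (α + θ) ≤ w (α - θ)))
    (hanti : ∀ α : ℝ, w α = w (α + Real.pi)) :
    ∀ s t : ℝ, w s = w t := by
  have hper : Periodic w Real.pi := fun α => (hanti α).symm
  exact hper.eq_of_forall_reflect_eq Real.pi_pos
    fun α _ hθ => hper.reflect_eq_of_isSeparableAt (hsep α) hθ

/-- A continuous, positive, 2π-periodic, angle-separable function `w`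
taking equal values at antipodal angles (`w(α) = w(α+π)` for all `α`) is constant. -/
theorem stmt_4 (w : ℝ → ℝ)
    (hpos : ∀ t, 0 < w t)
    (hcont : Continuous w)
    (hper : ∀ t, w (t + 2 * Real.pi) = w t)
    (hsep : ∀ α : ℝ,
      (∀ θ ∈ Set.Ioo (0 : ℝ) Real.pi, w (α - θ) ≤ w (α + θ)) ∨
      (∀ θ ∈ Set.Ioo (0 : ℝ) Real.pi, w (α + θ) ≤ w (α - θ)))
    (hanti : ∀ α : ℝ, w α = w (α + Real.pi)) :
    ∀ s t : ℝ, w s = w t :=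
  stmt_4_general w hsep hanti
end

section
/- Let N ≥ 2 and let u : S^{N−1} → (0,∞) be continuous, nonconstant, and separable in S^{N−1}. Then there exist a linear isometry M ∈ O(N) of ℝ^N and h₁, h₂ ∈ [−1,1] with h₁ > h₂ such that, writing u_M(x) = u(M⁻¹x): (i) {x ∈ S^{N−1} : u_M(x) = max u} = {x ∈ S^{N−1} : x_N ≥ h₁} and {x ∈ S^{N−1} : u_M(x) = min u} = {x ∈ S^{N−1} : x_N ≤ h₂}; (ii) for every h ∈ [−1,1], u_M is constant on the latitude {x ∈ S^{N−1} : x_N = h}; (iii) the function α ↦ u_M(0,…,0, cos α, sin α) is nonincreasing for α ∈ [π/2, 3π/2]. In particular, u is axially symmetric and monotone on S^{N−1}. -/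
open scoped RealInnerProductSpace

/-- The point `(0,…,0, cos α, sin α)` of `ℝ^N` (nonzero entries in coordinates
`N−2` and `N−1`). -/
noncomputable def circlePoint (N : ℕ) (α : ℝ) : EuclideanSpace ℝ (Fin N) :=
  (EuclideanSpace.equiv (Fin N) ℝ).symm fun i =>
    if (i : ℕ) = N - 2 then Real.cos α else if (i : ℕ) = N - 1 then Real.sin α else 0

open MeasureTheory Metric

section ReflAux

variable {F : Type*} [NormedAddCommGroup F] [InnerProductSpace ℝ F]

/-- Reflection across the hyperplane orthogonal to `e`. -/
noncomputable def reflVec (e : F) (x : F) : F := x - ((2 * ⟪e, x⟫) / ⟪e, e⟫) • e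

lemma inner_reflVec (e : F) (he : e ≠ 0) (x : F) : ⟪e, reflVec e x⟫ = -⟪e, x⟫ := by
  have h : ⟪e, e⟫ ≠ 0 := by
    simpa [real_inner_self_eq_norm_sq] using pow_ne_zero 2 (norm_ne_zero_iff.2 he)
  simp only [reflVec, inner_sub_right, real_inner_smul_right]
  field_simp
  ring

lemma reflVec_invol (e : F) (he : e ≠ 0) (x : F) : reflVec e (reflVec e x) = x := by
  rw [reflVec, inner_reflVec e he x]
  rw [reflVec]
  have : (2 * -⟪e, x⟫) / ⟪e, e⟫ = -((2 * ⟪e, x⟫) / ⟪e, e⟫) := by ring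
  rw [this, neg_smul, sub_neg_eq_add, sub_add_cancel]

lemma norm_reflVec (e : F) (he : e ≠ 0) (x : F) : ‖reflVec e x‖ = ‖x‖ := by
  have h : ‖e‖ ≠ 0 := norm_ne_zero_iff.2 he
  have hsq : ‖reflVec e x‖ ^ 2 = ‖x‖ ^ 2 := by
    rw [reflVec, @norm_sub_sq_real, real_inner_smul_right, norm_smul,
      real_inner_self_eq_norm_sq]
    rw [mul_pow, Real.norm_eq_abs, sq_abs, real_inner_comm x e]
    field_simp
    ring
  have h1 : (0:ℝ) ≤ ‖reflVec e x‖ := norm_nonneg _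
  have h2 : (0:ℝ) ≤ ‖x‖ := norm_nonneg _
  nlinarith

/-- `reflVec` as a linear map. -/
noncomputable def reflLM (e : F) : F →ₗ[ℝ] F where
  toFun := reflVec e
  map_add' x y := by
    simp only [reflVec, inner_add_right]
    rw [show (2 * (⟪e,x⟫ + ⟪e,y⟫)) / ⟪e,e⟫ = (2*⟪e,x⟫)/⟪e,e⟫ + (2*⟪e,y⟫)/⟪e,e⟫ by ring,
      add_smul]
    abel
  map_smul' c x := by
    simp only [reflVec, real_inner_smul_right, RingHom.id_apply, smul_sub, smul_smul]
    rw [show (2 * (c * ⟪e,x⟫)) / ⟪e,e⟫ = c * ((2*⟪e,x⟫)/⟪e,e⟫) by ring]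

/-- Reflection as a linear isometry equivalence. -/
noncomputable def reflIso (e : F) (he : e ≠ 0) : F ≃ₗᵢ[ℝ] F where
  toLinearEquiv := LinearEquiv.ofInvolutive (reflLM e) (fun x => reflVec_invol e he x)
  norm_map' x := norm_reflVec e he x

@[simp] lemma reflIso_apply (e : F) (he : e ≠ 0) (x : F) :
    reflIso e he x = x - ((2 * ⟪e, x⟫) / ⟪e, e⟫) • e := rfl

/-- The reflection across `(b-a)ᗮ` sends `b` to `a`, for unit vectors `a ≠ b`. -/
lemma reflVec_pair {a b : F} (ha : ‖a‖ = 1) (hb : ‖b‖ = 1) (hab : a ≠ b) :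
    reflVec (b - a) b = a := by
  have hinner : ⟪b - a, b⟫ = 1 - ⟪a, b⟫ := by
    rw [inner_sub_left, real_inner_self_eq_norm_sq, hb]; ring
  have hee : ⟪b - a, b - a⟫ = 2 * (1 - ⟪a, b⟫) := by
    rw [real_inner_self_eq_norm_sq, @norm_sub_sq_real, ha, hb, real_inner_comm b a]; ring
  have hne : (1 : ℝ) - ⟪a, b⟫ ≠ 0 := by
    intro h0
    have : ⟪b - a, b - a⟫ = 0 := by rw [hee, h0]; ring
    exact (sub_ne_zero.2 hab.symm) (inner_self_eq_zero.1 this)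
  rw [reflVec, hinner, hee]
  rw [show (2 * (1 - ⟪a,b⟫)) / (2 * (1 - ⟪a,b⟫)) = 1 from div_self (by
    intro h
    rcases mul_eq_zero.1 h with h2 | h2
    · norm_num at h2
    · exact hne h2)]
  simp

lemma inner_pair_pos {a b : F} (ha : ‖a‖ = 1) (hb : ‖b‖ = 1) (hab : a ≠ b) :
    0 < ⟪b - a, b⟫ := by
  have hinner : ⟪b - a, b⟫ = 1 - ⟪a, b⟫ := by
    rw [inner_sub_left, real_inner_self_eq_norm_sq, hb]; ring
  have hee2 : ⟪b - a, b - a⟫ = 2 * (1 - ⟪a, b⟫) := by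
    rw [real_inner_self_eq_norm_sq, @norm_sub_sq_real, ha, hb, real_inner_comm b a]; ring
  have hee : (0:ℝ) < ⟪b - a, b - a⟫ := by
    rw [real_inner_self_eq_norm_sq]
    exact pow_pos (norm_pos_iff.2 (sub_ne_zero.2 hab.symm)) 2
  rw [hinner]; rw [hee2] at hee; linarith

end ReflAux

section KeyAux

variable {N : ℕ}

local notation "E" => EuclideanSpace ℝ (Fin N)

lemma key_pos (u : E → ℝ) (hcont : ContinuousOn u (sphere 0 1))
    (hsep : ∀ a : E, a ≠ 0 →
      (∀ x ∈ sphere (0 : E) 1,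
        0 < ⟪a, x⟫ → u (x - ((2 * ⟪a, x⟫) / ⟪a, a⟫) • a) ≤ u x) ∨
      (∀ x ∈ sphere (0 : E) 1,
        0 < ⟪a, x⟫ → u x ≤ u (x - ((2 * ⟪a, x⟫) / ⟪a, a⟫) • a)))
    {a₀ b₀ : E} (ha₀ : a₀ ∈ sphere (0:E) 1) (hb₀ : b₀ ∈ sphere (0:E) 1)
    (hlt : u a₀ < u b₀) :
    0 < ⟪b₀ - a₀, ∫ x in (ball (0:E) 2 \ closedBall (0:E) (1/2)), (u (‖x‖⁻¹ • x)) • x⟫ := by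
  have ha₀n : ‖a₀‖ = 1 := by simpa using mem_sphere_zero_iff_norm.1 ha₀
  have hb₀n : ‖b₀‖ = 1 := by simpa using mem_sphere_zero_iff_norm.1 hb₀
  have hab : a₀ ≠ b₀ := fun h => absurd (congrArg u h) (ne_of_lt hlt)
  set e : E := b₀ - a₀ with he_def
  have he : e ≠ 0 := sub_ne_zero.2 (Ne.symm hab)
  -- the one-sided reflection inequality
  have hR : ∀ x ∈ sphere (0 : E) 1, 0 < ⟪e, x⟫ → u (reflVec e x) ≤ u x := by
    rcases hsep e he with h | h
    · exact h
    · exfalso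
      have h1 := h b₀ hb₀ (inner_pair_pos ha₀n hb₀n hab)
      rw [show b₀ - ((2 * ⟪e, b₀⟫) / ⟪e, e⟫) • e = reflVec e b₀ from rfl,
        reflVec_pair ha₀n hb₀n hab] at h1
      exact absurd h1 (not_le.2 hlt)
  set σ : E ≃ₗᵢ[ℝ] E := reflIso e he with hσ_def
  set ut : E → ℝ := fun x => u (‖x‖⁻¹ • x) with hut_def
  set A : Set E := ball (0:E) 2 \ closedBall (0:E) (1/2) with hA_def
  set K : Set E := closedBall (0:E) 2 \ ball (0:E) (1/2) with hK_def
  have hAopen : IsOpen A := isOpen_ball.sdiff Metric.isClosed_closedBall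
  have hAK : A ⊆ K := fun x hx => ⟨ball_subset_closedBall hx.1,
    fun h => hx.2 (closedBall_subset_closedBall (by norm_num) (ball_subset_closedBall h))⟩
  have hKcompact : IsCompact K := isCompact_closedBall 0 2 |>.of_isClosed_subset
    (Metric.isClosed_closedBall.sdiff isOpen_ball) Set.diff_subset
  have hK0 : (0:E) ∉ K := by
    intro h
    exact h.2 (mem_ball_self (by norm_num))
  have hKne : ∀ x ∈ K, x ≠ 0 := fun x hx h => hK0 (h ▸ hx)
  have hg : ContinuousOn (fun x : E => ‖x‖⁻¹ • x) K :=
    ((continuous_norm.continuousOn).inv₀ (fun x hx => norm_ne_zero_iff.2 (hKne x hx))).smul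
      continuousOn_id
  have hgS : ∀ x ∈ K, ‖x‖⁻¹ • x ∈ sphere (0:E) 1 := fun x hx => by
    rw [mem_sphere_zero_iff_norm]
    exact norm_smul_inv_norm (hKne x hx)
  have hutK : ContinuousOn ut K := hcont.comp hg hgS
  have hσK : Set.MapsTo σ K K := by
    intro x hx
    simp only [hK_def, Set.mem_diff, mem_closedBall_zero_iff, mem_ball_zero_iff,
      LinearIsometryEquiv.norm_map] at hx ⊢
    exact hx
  have hutσK : ContinuousOn (fun x => ut (σ x)) K := hutK.comp
    (σ.continuous.continuousOn) hσK
  -- the positive half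
  set Ap : Set E := A ∩ {x : E | 0 < ⟪e, x⟫} with hAp_def
  set Am : Set E := A ∩ {x : E | ⟪e, x⟫ < 0} with hAm_def
  have hApopen : IsOpen Ap := hAopen.inter (isOpen_lt continuous_const (innerSL ℝ e).continuous)
  have hAmopen : IsOpen Am := hAopen.inter (isOpen_lt (innerSL ℝ e).continuous continuous_const)
  -- integrability
  have hinnercont : Continuous (fun x : E => ⟪e, x⟫) := continuous_const.inner continuous_id
  have hcont1K : ContinuousOn (fun x => ut x * ⟪e, x⟫) K := hutK.mul hinnercont.continuousOn
  have hcont2K : ContinuousOn (fun x => ut (σ x) * ⟪e, x⟫) K :=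
    hutσK.mul hinnercont.continuousOn
  have hint1 : IntegrableOn (fun x => ut x * ⟪e, x⟫) A :=
    (hcont1K.integrableOn_compact hKcompact).mono_set hAK
  have hint2 : IntegrableOn (fun x => ut (σ x) * ⟪e, x⟫) A :=
    (hcont2K.integrableOn_compact hKcompact).mono_set hAK
  -- the splitting
  have hnull : volume {x : E | ⟪e, x⟫ = 0} = 0 := by
    have hset : {x : E | ⟪e, x⟫ = (0:ℝ)} = (LinearMap.ker ((innerSL ℝ e) : E →ₗ[ℝ] ℝ) : Set E) := by
      ext x
      simp [LinearMap.mem_ker]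
    rw [hset]
    apply Measure.addHaar_submodule
    intro htop
    have hmem : e ∈ LinearMap.ker ((innerSL ℝ e) : E →ₗ[ℝ] ℝ) := by
      rw [htop]; trivial
    have : ⟪e, e⟫ = (0:ℝ) := by simpa using hmem
    exact (inner_self_ne_zero.2 he) this
  have haeeq : A =ᵐ[volume] ((Ap ∪ Am : Set E)) := by
    have h1 : volume (A \ (Ap ∪ Am)) = 0 := by
      apply measure_mono_null _ hnull
      intro x hx
      show ⟪e, x⟫ = 0
      by_contra hne
      rcases lt_or_gt_of_ne hne with h | h
      · exact hx.2 (Or.inr ⟨hx.1, h⟩)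
      · exact hx.2 (Or.inl ⟨hx.1, h⟩)
    have h2 : volume ((Ap ∪ Am) \ A) = 0 := by
      have hsub : (Ap ∪ Am) \ A ⊆ (∅ : Set E) := by
        intro x hx
        exact absurd (hx.1.elim (fun h => h.1) (fun h => h.1)) hx.2
      exact measure_mono_null hsub measure_empty
    exact (MeasureTheory.ae_eq_set).2 ⟨h1, h2⟩
  have hsplit : ∫ x in A, ut x * ⟪e, x⟫ = (∫ x in Ap, ut x * ⟪e, x⟫) + ∫ x in Am, ut x * ⟪e, x⟫ := by
    rw [MeasureTheory.setIntegral_congr_set haeeq]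
    apply MeasureTheory.setIntegral_union
    · rw [Set.disjoint_left]
      intro x hx1 hx2
      have ha : (0:ℝ) < ⟪e, x⟫ := hx1.2
      have hb : (⟪e, x⟫ : ℝ) < 0 := hx2.2
      linarith
    · exact hAmopen.measurableSet
    · exact hint1.mono_set Set.inter_subset_left
    · exact hint1.mono_set Set.inter_subset_left
  -- change of variables on the negative half
  have hσinner : ∀ y : E, ⟪e, σ y⟫ = -⟪e, y⟫ := fun y => inner_reflVec e he y
  have hσA : ∀ y : E, σ y ∈ A ↔ y ∈ A := by
    intro y
    simp only [hA_def, Set.mem_diff, mem_ball_zero_iff, mem_closedBall_zero_iff,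
      LinearIsometryEquiv.norm_map]
  have hmp : MeasurePreserving σ volume volume := σ.measurePreserving
  have hemb : MeasurableEmbedding σ := σ.toHomeomorph.measurableEmbedding
  have hpre : (⇑σ) ⁻¹' Am = Ap := by
    ext x
    constructor
    · rintro ⟨h1, h2⟩
      refine ⟨(hσA x).1 h1, ?_⟩
      show (0:ℝ) < ⟪e, x⟫
      have h2' : (⟪e, σ x⟫ : ℝ) < 0 := h2
      rw [hσinner x] at h2'
      linarith
    · rintro ⟨h1, h2⟩
      refine ⟨(hσA x).2 h1, ?_⟩
      show (⟪e, σ x⟫ : ℝ) < 0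
      rw [hσinner x]
      have h2' : (0:ℝ) < ⟪e, x⟫ := h2
      linarith
  have hchg : ∫ x in Am, ut x * ⟪e, x⟫ = ∫ x in Ap, -(ut (σ x) * ⟪e, x⟫) := by
    have hcv := hmp.setIntegral_preimage_emb hemb (fun x => ut x * ⟪e, x⟫) Am
    rw [← hcv, hpre]
    apply MeasureTheory.setIntegral_congr_fun hApopen.measurableSet
    intro x hx
    show ut (σ x) * ⟪e, σ x⟫ = -(ut (σ x) * ⟪e, x⟫)
    rw [hσinner x]
    ring
  -- the combined integral
  have hintAp1 : IntegrableOn (fun x => ut x * ⟪e, x⟫) Ap := hint1.mono_set Set.inter_subset_left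
  have hintAp2 : IntegrableOn (fun x => ut (σ x) * ⟪e, x⟫) Ap :=
    hint2.mono_set Set.inter_subset_left
  have hcomb : ∫ x in A, ut x * ⟪e, x⟫ = ∫ x in Ap, (ut x - ut (σ x)) * ⟪e, x⟫ := by
    rw [hsplit, hchg, MeasureTheory.integral_neg]
    have heq : ∫ x in Ap, (ut x - ut (σ x)) * ⟪e, x⟫
        = ∫ x in Ap, (ut x * ⟪e, x⟫ - ut (σ x) * ⟪e, x⟫) := by
      apply integral_congr_ae
      filter_upwards with x
      ring
    rw [heq, MeasureTheory.integral_sub hintAp1 hintAp2]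
    ring
  -- positivity
  have hApK : Ap ⊆ K := fun x hx => hAK hx.1
  have hFcontK : ContinuousOn (fun x => (ut x - ut (σ x)) * ⟪e, x⟫) K :=
    (hutK.sub hutσK).mul hinnercont.continuousOn
  have hFintAp : IntegrableOn (fun x => (ut x - ut (σ x)) * ⟪e, x⟫) Ap :=
    (hFcontK.integrableOn_compact hKcompact).mono_set hApK
  have hFnonneg : ∀ x ∈ Ap, 0 ≤ (ut x - ut (σ x)) * ⟪e, x⟫ := by
    intro x hx
    have hxK : x ∈ K := hApK hx
    have hxne : x ≠ 0 := hKne x hxK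
    have hxnorm : 0 < ‖x‖ := norm_pos_iff.2 hxne
    have hy : ‖x‖⁻¹ • x ∈ sphere (0:E) 1 := hgS x hxK
    have hx2 : (0:ℝ) < ⟪e, x⟫ := hx.2
    have hyinner : (0:ℝ) < ⟪e, ‖x‖⁻¹ • x⟫ := by
      rw [real_inner_smul_right]
      exact mul_pos (inv_pos.2 hxnorm) hx2
    have hle := hR _ hy hyinner
    have hkey : ut (σ x) = u (reflVec e (‖x‖⁻¹ • x)) := by
      show u (‖σ x‖⁻¹ • σ x) = _
      rw [LinearIsometryEquiv.norm_map]
      congr 1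
      rw [← LinearIsometryEquiv.map_smul]
      rfl
    have h1 : ut (σ x) ≤ ut x := by rw [hkey]; exact hle
    exact mul_nonneg (sub_nonneg.2 h1) (le_of_lt hx2)
  have hb₀A : b₀ ∈ Ap := by
    refine ⟨⟨?_, ?_⟩, ?_⟩
    · rw [mem_ball_zero_iff, hb₀n]; norm_num
    · intro h
      rw [mem_closedBall_zero_iff, hb₀n] at h
      norm_num at h
    · exact inner_pair_pos ha₀n hb₀n hab
  have hutb₀ : ut b₀ = u b₀ := by
    show u (‖b₀‖⁻¹ • b₀) = u b₀
    rw [hb₀n]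
    norm_num
  have hutσb₀ : ut (σ b₀) = u a₀ := by
    show u (‖σ b₀‖⁻¹ • σ b₀) = u a₀
    rw [LinearIsometryEquiv.norm_map, hb₀n]
    simp only [inv_one, one_smul]
    congr 1
    show reflVec e b₀ = a₀
    exact reflVec_pair ha₀n hb₀n hab
  have hFb₀ : 0 < (ut b₀ - ut (σ b₀)) * ⟪e, b₀⟫ :=
    mul_pos (by rw [hutb₀, hutσb₀]; linarith) (inner_pair_pos ha₀n hb₀n hab)
  have hpos : 0 < ∫ x in Ap, (ut x - ut (σ x)) * ⟪e, x⟫ := by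
    have hFat : ContinuousAt (fun x => (ut x - ut (σ x)) * ⟪e, x⟫) b₀ :=
      (hFcontK.mono hApK).continuousAt (hApopen.mem_nhds hb₀A)
    have hev : (fun x => (ut x - ut (σ x)) * ⟪e, x⟫) ⁻¹'
        (Set.Ioi (((ut b₀ - ut (σ b₀)) * ⟪e, b₀⟫)/2)) ∈ nhds b₀ :=
      hFat (Ioi_mem_nhds (by linarith))
    obtain ⟨r, hr0, hball⟩ :=
      Metric.mem_nhds_iff.1 (Filter.inter_mem hev (hApopen.mem_nhds hb₀A))
    have hballAp : ball b₀ r ⊆ Ap := fun x hx => (hball hx).2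
    have h1 : ((ut b₀ - ut (σ b₀)) * ⟪e, b₀⟫)/2 * (volume (ball b₀ r)).toReal
        ≤ ∫ x in ball b₀ r, (ut x - ut (σ x)) * ⟪e, x⟫ := by
      rw [show ((ut b₀ - ut (σ b₀)) * ⟪e, b₀⟫)/2 * (volume (ball b₀ r)).toReal
          = volume.real (ball b₀ r) • (((ut b₀ - ut (σ b₀)) * ⟪e, b₀⟫)/2) by
        rw [smul_eq_mul, mul_comm]; rfl]
      apply MeasureTheory.setIntegral_ge_of_const_le measurableSet_ball
        measure_ball_lt_top.ne
      · intro x hx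
        exact le_of_lt (hball hx).1
      · exact hFintAp.mono_set hballAp
    have h2 : ∫ x in ball b₀ r, (ut x - ut (σ x)) * ⟪e, x⟫
        ≤ ∫ x in Ap, (ut x - ut (σ x)) * ⟪e, x⟫ := by
      apply MeasureTheory.setIntegral_mono_set hFintAp
      · exact (ae_restrict_iff' hApopen.measurableSet).2 (Filter.Eventually.of_forall hFnonneg)
      · exact hballAp.eventuallyLE
    have h3 : 0 < ((ut b₀ - ut (σ b₀)) * ⟪e, b₀⟫)/2 * (volume (ball b₀ r)).toReal :=
      mul_pos (half_pos hFb₀)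
        (ENNReal.toReal_pos (measure_ball_pos volume b₀ hr0).ne' measure_ball_lt_top.ne)
    linarith
  -- conclusion
  have hintsmul : IntegrableOn (fun x => ut x • x) A volume :=
    ((hutK.smul continuousOn_id).integrableOn_compact hKcompact).mono_set hAK
  have hfin : ⟪e, ∫ x in A, ut x • x⟫ = ∫ x in A, ut x * ⟪e, x⟫ := by
    rw [← integral_inner hintsmul e]
    apply integral_congr_ae
    filter_upwards with x
    exact real_inner_smul_right e x (ut x)
  have hgoal : (0:ℝ) < ⟪e, ∫ x in A, ut x • x⟫ := by rw [hfin, hcomb]; exact hpos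
  exact hgoal

end KeyAux

lemma circlePoint_coord {N : ℕ} (hN : 2 ≤ N) (α : ℝ) (h : N - 1 < N) :
    circlePoint N α ⟨N - 1, h⟩ = Real.sin α := by
  show (if (N-1 : ℕ) = N - 2 then Real.cos α else if (N-1:ℕ) = N - 1 then Real.sin α else 0) = _
  rw [if_neg (by omega), if_pos rfl]

lemma circlePoint_sphere {N : ℕ} (hN : 2 ≤ N) (α : ℝ) :
    circlePoint N α ∈ Metric.sphere (0 : EuclideanSpace ℝ (Fin N)) 1 := by
  have h2 : N - 2 < N := by omega
  have h1 : N - 1 < N := by omega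
  have hdecomp : circlePoint N α = Real.cos α • EuclideanSpace.single ⟨N-2,h2⟩ (1:ℝ)
      + Real.sin α • EuclideanSpace.single ⟨N-1,h1⟩ (1:ℝ) := by
    ext i
    have hval2 : (i = (⟨N-2,h2⟩ : Fin N)) ↔ ((i:ℕ) = N-2) := by
      rw [Fin.ext_iff]
    have hval1 : (i = (⟨N-1,h1⟩ : Fin N)) ↔ ((i:ℕ) = N-1) := by
      rw [Fin.ext_iff]
    show (if (i : ℕ) = N - 2 then Real.cos α else if (i : ℕ) = N - 1 then Real.sin α else 0) = _
    simp only [PiLp.add_apply, PiLp.smul_apply, EuclideanSpace.single_apply, smul_eq_mul]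
    by_cases hi2 : (i : ℕ) = N - 2
    · rw [if_pos hi2, if_pos (hval2.2 hi2), if_neg (fun h => by
        have := hval1.1 h
        omega)]
      ring
    · rw [if_neg hi2, if_neg (fun h => hi2 (hval2.1 h))]
      by_cases hi1 : (i : ℕ) = N - 1
      · rw [if_pos hi1, if_pos (hval1.2 hi1)]
        ring
      · rw [if_neg hi1, if_neg (fun h => hi1 (hval1.1 h))]
        ring
  rw [Metric.mem_sphere, dist_zero_right, hdecomp]
  have horth : ⟪EuclideanSpace.single (⟨N-2,h2⟩ : Fin N) (1:ℝ),
      EuclideanSpace.single (⟨N-1,h1⟩ : Fin N) (1:ℝ)⟫ = 0 := by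
    rw [EuclideanSpace.inner_single_left, EuclideanSpace.single_apply]
    have hne : ¬ ((⟨N-2,h2⟩ : Fin N) = (⟨N-1,h1⟩ : Fin N)) := by
      intro h
      rw [Fin.ext_iff] at h
      simp only at h
      omega
    rw [if_neg hne]
    simp
  have hsq : ‖Real.cos α • EuclideanSpace.single (⟨N-2,h2⟩ : Fin N) (1:ℝ)
      + Real.sin α • EuclideanSpace.single (⟨N-1,h1⟩ : Fin N) (1:ℝ)‖^2 = 1 := by
    rw [@norm_add_sq_real, real_inner_smul_left, real_inner_smul_right, horth,
      norm_smul, norm_smul, EuclideanSpace.norm_single, EuclideanSpace.norm_single]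
    simp only [Real.norm_eq_abs, norm_one, mul_one, mul_zero]
    rw [sq_abs, sq_abs]
    have := Real.sin_sq_add_cos_sq α
    linarith
  nlinarith [norm_nonneg (Real.cos α • EuclideanSpace.single (⟨N-2,h2⟩ : Fin N) (1:ℝ)
      + Real.sin α • EuclideanSpace.single (⟨N-1,h1⟩ : Fin N) (1:ℝ)), hsq]

set_option maxHeartbeats 1000000 in
/-- A continuous, positive, nonconstant, separable function on the unit
sphere `S^{N−1}` is axially symmetric and monotone: after an orthogonal change of
coordinates `M`, its maximum set is the polar cap `{x_N ≥ h₁}`, its minimum set is the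
polar cap `{x_N ≤ h₂}` with `h₁ > h₂`, it is constant on every latitude `{x_N = h}`,
and `α ↦ u_M(0,…,0, cos α, sin α)` is nonincreasing on `[π/2, 3π/2]`. -/
theorem stmt_7 (N : ℕ) (hN : 2 ≤ N)
    (u : EuclideanSpace ℝ (Fin N) → ℝ)
    (hcont : ContinuousOn u (Metric.sphere (0 : EuclideanSpace ℝ (Fin N)) 1))
    (hpos : ∀ x ∈ Metric.sphere (0 : EuclideanSpace ℝ (Fin N)) 1, 0 < u x)
    (hnc : ∃ x ∈ Metric.sphere (0 : EuclideanSpace ℝ (Fin N)) 1,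
           ∃ y ∈ Metric.sphere (0 : EuclideanSpace ℝ (Fin N)) 1, u x ≠ u y)
    (hsep : ∀ a : EuclideanSpace ℝ (Fin N), a ≠ 0 →
      (∀ x ∈ Metric.sphere (0 : EuclideanSpace ℝ (Fin N)) 1,
        0 < ⟪a, x⟫ → u (x - ((2 * ⟪a, x⟫) / ⟪a, a⟫) • a) ≤ u x) ∨
      (∀ x ∈ Metric.sphere (0 : EuclideanSpace ℝ (Fin N)) 1,
        0 < ⟪a, x⟫ → u x ≤ u (x - ((2 * ⟪a, x⟫) / ⟪a, a⟫) • a))) :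
    ∃ (M : EuclideanSpace ℝ (Fin N) ≃ₗᵢ[ℝ] EuclideanSpace ℝ (Fin N)) (h₁ h₂ : ℝ),
      h₁ ∈ Set.Icc (-1 : ℝ) 1 ∧ h₂ ∈ Set.Icc (-1 : ℝ) 1 ∧ h₂ < h₁ ∧
      (∀ x ∈ Metric.sphere (0 : EuclideanSpace ℝ (Fin N)) 1,
        ((∀ y ∈ Metric.sphere (0 : EuclideanSpace ℝ (Fin N)) 1, u y ≤ u (M.symm x)) ↔
          h₁ ≤ x ⟨N - 1, by omega⟩)) ∧
      (∀ x ∈ Metric.sphere (0 : EuclideanSpace ℝ (Fin N)) 1,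
        ((∀ y ∈ Metric.sphere (0 : EuclideanSpace ℝ (Fin N)) 1, u (M.symm x) ≤ u y) ↔
          x ⟨N - 1, by omega⟩ ≤ h₂)) ∧
      (∀ h ∈ Set.Icc (-1 : ℝ) 1,
        ∀ x ∈ Metric.sphere (0 : EuclideanSpace ℝ (Fin N)) 1,
        ∀ y ∈ Metric.sphere (0 : EuclideanSpace ℝ (Fin N)) 1,
          x ⟨N - 1, by omega⟩ = h → y ⟨N - 1, by omega⟩ = h →
          u (M.symm x) = u (M.symm y)) ∧
      AntitoneOn (fun α => u (M.symm (circlePoint N α)))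
        (Set.Icc (Real.pi / 2) (3 * Real.pi / 2)) := by
  classical
  set S := Metric.sphere (0 : EuclideanSpace ℝ (Fin N)) 1 with hS
  -- the barycenter
  set bint : EuclideanSpace ℝ (Fin N) :=
    ∫ x in (ball (0 : EuclideanSpace ℝ (Fin N)) 2 \ closedBall (0 : EuclideanSpace ℝ (Fin N)) (1/2)),
      (u (‖x‖⁻¹ • x)) • x with hbint
  have hmono : ∀ x ∈ S, ∀ y ∈ S, u x < u y → 0 < ⟪y - x, bint⟫ := by
    intro x hx y hy hxy
    exact key_pos u hcont hsep hx hy hxy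
  -- nonvanishing
  have hbne : bint ≠ 0 := by
    obtain ⟨x₀, hx₀, y₀, hy₀, hne⟩ := hnc
    rcases hne.lt_or_gt with h | h
    · intro h0
      have := hmono x₀ hx₀ y₀ hy₀ h
      rw [h0, inner_zero_right] at this
      exact lt_irrefl 0 this
    · intro h0
      have := hmono y₀ hy₀ x₀ hx₀ h
      rw [h0, inner_zero_right] at this
      exact lt_irrefl 0 this
  set P : EuclideanSpace ℝ (Fin N) := ‖bint‖⁻¹ • bint with hP
  have hPnorm : ‖P‖ = 1 := norm_smul_inv_norm hbne
  have hPS : P ∈ S := by rw [hS, mem_sphere_zero_iff_norm]; exact hPnorm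
  -- monotonicity with respect to the height ⟪P, ·⟫
  have hmono2 : ∀ x ∈ S, ∀ y ∈ S, ⟪P, x⟫ ≤ ⟪P, y⟫ → u x ≤ u y := by
    intro x hx y hy hle
    by_contra hcon
    push_neg at hcon
    have h1 := hmono y hy x hx hcon
    have h2 : ⟪x - y, P⟫ = ‖bint‖⁻¹ * ⟪x - y, bint⟫ := by
      rw [hP, real_inner_smul_right]
    have h3 : (0:ℝ) < ⟪x - y, P⟫ := by
      rw [h2]
      exact mul_pos (inv_pos.2 (norm_pos_iff.2 hbne)) h1
    rw [inner_sub_left] at h3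
    have e1 : ⟪x, P⟫ = ⟪P, x⟫ := real_inner_comm P x
    have e2 : ⟪y, P⟫ = ⟪P, y⟫ := real_inner_comm P y
    linarith
  clear hP
  clear_value P
  -- the isometry taking `P` to the last standard basis vector
  have hN1 : N - 1 < N := by omega
  have hN2 : N - 2 < N := by omega
  set v : EuclideanSpace ℝ (Fin N) := EuclideanSpace.single ⟨N - 1, hN1⟩ (1:ℝ) with hv
  have hvnorm : ‖v‖ = 1 := by
    rw [hv, EuclideanSpace.norm_single]
    norm_num
  obtain ⟨M, hM⟩ : ∃ M : EuclideanSpace ℝ (Fin N) ≃ₗᵢ[ℝ] EuclideanSpace ℝ (Fin N),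
      ∀ x, ⟪P, M.symm x⟫ = ⟪v, x⟫ := by
    by_cases hPv : P = v
    · refine ⟨LinearIsometryEquiv.refl ℝ _, fun x => by rw [hPv]; rfl⟩
    · have hvP : v - P ≠ 0 := sub_ne_zero.2 (fun h => hPv h.symm)
      refine ⟨reflIso (v - P) hvP, fun x => ?_⟩
      have hMP : reflIso (v - P) hvP P = v := by
        have h1 : reflVec (v - P) v = P := reflVec_pair hPnorm hvnorm hPv
        have h2 := reflVec_invol (v - P) hvP v
        rw [h1] at h2
        exact h2
      calc ⟪P, (reflIso (v - P) hvP).symm x⟫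
          = ⟪reflIso (v - P) hvP P, reflIso (v - P) hvP ((reflIso (v - P) hvP).symm x)⟫ :=
            ((reflIso (v - P) hvP).inner_map_map P _).symm
        _ = ⟪v, x⟫ := by rw [hMP, LinearIsometryEquiv.apply_symm_apply]
  have hMx : ∀ x : EuclideanSpace ℝ (Fin N), ⟪P, M.symm x⟫ = x ⟨N - 1, hN1⟩ := by
    intro x
    rw [hM x, hv, EuclideanSpace.inner_single_left]
    simp
  have hMS : ∀ x ∈ S, M.symm x ∈ S := by
    intro x hx
    rw [hS, mem_sphere_zero_iff_norm] at hx ⊢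
    rw [LinearIsometryEquiv.norm_map]
    exact hx
  -- a unit vector orthogonal to P
  set Q : EuclideanSpace ℝ (Fin N) := M.symm (EuclideanSpace.single ⟨N - 2, hN2⟩ (1:ℝ)) with hQ
  have hQnorm : ‖Q‖ = 1 := by
    rw [hQ, LinearIsometryEquiv.norm_map, EuclideanSpace.norm_single]
    norm_num
  have hPQ : ⟪P, Q⟫ = 0 := by
    rw [hQ, hMx]
    rw [EuclideanSpace.single_apply]
    have : (⟨N - 1, hN1⟩ : Fin N) ≠ ⟨N - 2, hN2⟩ := by
      intro h
      have := Fin.mk.injEq (N-1) hN1 (N-2) hN2 ▸ h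
      omega
    simp [this]
  -- the meridian parametrization and profile function
  set pt : ℝ → EuclideanSpace ℝ (Fin N) := fun t => t • P + Real.sqrt (1 - t^2) • Q with hpt
  have hptS : ∀ t, -1 ≤ t → t ≤ 1 → pt t ∈ S := by
    intro t ht1 ht2
    rw [hS, mem_sphere_zero_iff_norm]
    have h1 : (0:ℝ) ≤ 1 - t^2 := by nlinarith
    have hsq : ‖pt t‖^2 = 1 := by
      simp only [hpt]
      rw [@norm_add_sq_real]
      rw [real_inner_smul_left, real_inner_smul_right, hPQ]
      rw [norm_smul, norm_smul, hPnorm, hQnorm]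
      simp only [Real.norm_eq_abs]
      rw [mul_pow, mul_pow, sq_abs, sq_abs, Real.sq_sqrt h1]
      ring
    nlinarith [norm_nonneg (pt t)]
  have hptinner : ∀ t, ⟪P, pt t⟫ = t := by
    intro t
    simp only [hpt]
    rw [inner_add_right, real_inner_smul_right, real_inner_smul_right, hPQ,
      real_inner_self_eq_norm_sq, hPnorm]
    ring
  set f : ℝ → ℝ := fun t => u (pt t) with hf
  -- u is the profile of the height
  have habs : ∀ x ∈ S, -1 ≤ ⟪P, x⟫ ∧ ⟪P, x⟫ ≤ 1 := by
    intro x hx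
    have hxn : ‖x‖ = 1 := by rw [hS, mem_sphere_zero_iff_norm] at hx; exact hx
    have := abs_real_inner_le_norm P x
    rw [hPnorm, hxn, one_mul] at this
    exact abs_le.1 this
  have hfu : ∀ x ∈ S, u x = f ⟪P, x⟫ := by
    intro x hx
    obtain ⟨h1, h2⟩ := habs x hx
    have hpS := hptS ⟪P, x⟫ h1 h2
    have he : ⟪P, pt ⟪P, x⟫⟫ = ⟪P, x⟫ := hptinner _
    exact le_antisymm (hmono2 x hx _ hpS (le_of_eq he.symm)) (hmono2 _ hpS x hx (le_of_eq he))
  have hfmono : ∀ s t, -1 ≤ s → s ≤ t → t ≤ 1 → f s ≤ f t := by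
    intro s t h1 h2 h3
    have hsS := hptS s h1 (le_trans h2 h3)
    have htS := hptS t (le_trans h1 h2) h3
    apply hmono2 _ hsS _ htS
    rw [hptinner, hptinner]
    exact h2
  have hpt1 : pt 1 = P := by
    simp only [hpt]
    norm_num [Real.sqrt_zero]
  have hptm1 : pt (-1) = -P := by
    simp only [hpt]
    norm_num [Real.sqrt_zero]
  have hmaxf : ∀ y ∈ S, u y ≤ f 1 := by
    intro y hy
    rw [hfu y hy]
    exact hfmono _ _ (habs y hy).1 (habs y hy).2 le_rfl
  have hminf : ∀ y ∈ S, f (-1) ≤ u y := by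
    intro y hy
    rw [hfu y hy]
    exact hfmono _ _ le_rfl (habs y hy).1 (habs y hy).2
  -- continuity of the profile
  have hptcont : Continuous pt := by
    apply Continuous.add
    · exact continuous_id.smul continuous_const
    · exact (Real.continuous_sqrt.comp (continuous_const.sub (continuous_pow 2))).smul
        continuous_const
  have hfcont : ContinuousOn f (Set.Icc (-1:ℝ) 1) := by
    apply hcont.comp hptcont.continuousOn
    intro t ht
    exact hptS t ht.1 ht.2
  -- the thresholds
  set T₁ : Set ℝ := {t | t ∈ Set.Icc (-1:ℝ) 1 ∧ f 1 ≤ f t} with hT₁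
  set T₂ : Set ℝ := {t | t ∈ Set.Icc (-1:ℝ) 1 ∧ f t ≤ f (-1)} with hT₂
  have hT₁closed : IsClosed T₁ := by
    have he : T₁ = Set.Icc (-1:ℝ) 1 ∩ f ⁻¹' (Set.Ici (f 1)) := rfl
    rw [he]
    exact hfcont.preimage_isClosed_of_isClosed isClosed_Icc isClosed_Ici
  have hT₂closed : IsClosed T₂ := by
    have he : T₂ = Set.Icc (-1:ℝ) 1 ∩ f ⁻¹' (Set.Iic (f (-1))) := rfl
    rw [he]
    exact hfcont.preimage_isClosed_of_isClosed isClosed_Icc isClosed_Iic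
  have hT₁ne : T₁.Nonempty := ⟨1, ⟨by norm_num, le_rfl⟩⟩
  have hT₂ne : T₂.Nonempty := ⟨-1, ⟨by norm_num, le_rfl⟩⟩
  have hT₁bdd : BddBelow T₁ := ⟨-1, fun t ht => ht.1.1⟩
  have hT₂bdd : BddAbove T₂ := ⟨1, fun t ht => ht.1.2⟩
  have hh₁mem : sInf T₁ ∈ T₁ := hT₁closed.csInf_mem hT₁ne hT₁bdd
  have hh₂mem : sSup T₂ ∈ T₂ := hT₂closed.csSup_mem hT₂ne hT₂bdd
  have fh₁ : f (sInf T₁) = f 1 :=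
    le_antisymm (hfmono _ _ hh₁mem.1.1 hh₁mem.1.2 le_rfl) hh₁mem.2
  have fh₂ : f (sSup T₂) = f (-1) :=
    le_antisymm hh₂mem.2 (hfmono _ _ le_rfl hh₂mem.1.1 hh₂mem.1.2)
  have hPcoordone : ⟪P, P⟫ = 1 := by
    rw [real_inner_self_eq_norm_sq, hPnorm]
    norm_num
  have huP : u P = f 1 := by
    rw [hfu P hPS, hPcoordone]
  have hlt12 : sSup T₂ < sInf T₁ := by
    by_contra hcon
    push_neg at hcon
    have hAB : f 1 ≤ f (-1) := by
      rw [← fh₁, ← fh₂]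
      exact hfmono _ _ hh₁mem.1.1 hcon hh₂mem.1.2
    obtain ⟨x₀, hx₀, y₀, hy₀, hne0⟩ := hnc
    apply hne0
    have c1 : u x₀ ≤ f 1 := hmaxf x₀ hx₀
    have c2 : u y₀ ≤ f 1 := hmaxf y₀ hy₀
    have d1 : f (-1) ≤ u x₀ := hminf x₀ hx₀
    have d2 : f (-1) ≤ u y₀ := hminf y₀ hy₀
    linarith
  -- coordinate description
  have hcoord : ∀ x ∈ S, u (M.symm x) = f (x ⟨N-1, hN1⟩)
      ∧ -1 ≤ x ⟨N-1, hN1⟩ ∧ x ⟨N-1, hN1⟩ ≤ 1 := by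
    intro x hx
    have h1 : M.symm x ∈ S := hMS x hx
    have h2 : u (M.symm x) = f ⟪P, M.symm x⟫ := hfu _ h1
    obtain ⟨hb1, hb2⟩ := habs _ h1
    rw [hMx x] at h2 hb1 hb2
    exact ⟨h2, hb1, hb2⟩
  refine ⟨M, sInf T₁, sSup T₂, hh₁mem.1, hh₂mem.1, hlt12, ?_, ?_, ?_, ?_⟩
  · -- maximum set
    intro x hx
    obtain ⟨hcox, hb1, hb2⟩ := hcoord x hx
    constructor
    · intro hall
      have h1 : f 1 ≤ f (x ⟨N-1, hN1⟩) := by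
        rw [← huP, ← hcox]
        exact hall P hPS
      exact csInf_le hT₁bdd ⟨⟨hb1, hb2⟩, h1⟩
    · intro hle y hy
      calc u y ≤ f 1 := hmaxf y hy
        _ = f (sInf T₁) := fh₁.symm
        _ ≤ f (x ⟨N-1, hN1⟩) := hfmono _ _ hh₁mem.1.1 hle hb2
        _ = u (M.symm x) := hcox.symm
  · -- minimum set
    intro x hx
    obtain ⟨hcox, hb1, hb2⟩ := hcoord x hx
    have hm1S : pt (-1) ∈ S := hptS (-1) le_rfl (by norm_num)
    constructor
    · intro hall
      have h1 : f (x ⟨N-1, hN1⟩) ≤ f (-1) := by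
        rw [← hcox]
        exact hall (pt (-1)) hm1S
      exact le_csSup hT₂bdd ⟨⟨hb1, hb2⟩, h1⟩
    · intro hle y hy
      calc u (M.symm x) = f (x ⟨N-1, hN1⟩) := hcox
        _ ≤ f (sSup T₂) := hfmono _ _ hb1 hle hh₂mem.1.2
        _ = f (-1) := fh₂
        _ ≤ u y := hminf y hy
  · -- latitudes
    intro h hIcc x hx y hy hxc hyc
    rw [(hcoord x hx).1, (hcoord y hy).1, hxc, hyc]
  · -- monotone along the meridian circle
    intro α hα β hβ hab
    have hcpa : circlePoint N α ∈ S := circlePoint_sphere hN α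
    have hcpb : circlePoint N β ∈ S := circlePoint_sphere hN β
    show u (M.symm (circlePoint N β)) ≤ u (M.symm (circlePoint N α))
    rw [(hcoord _ hcpa).1, (hcoord _ hcpb).1, circlePoint_coord hN α hN1,
      circlePoint_coord hN β hN1]
    have hsin : Real.sin β ≤ Real.sin α := by
      rw [← Real.cos_sub_pi_div_two α, ← Real.cos_sub_pi_div_two β]
      apply Real.cos_le_cos_of_nonneg_of_le_pi
      · linarith [hα.1]
      · have h2 := hβ.2
        linarith
      · linarith
    exact hfmono _ _ (Real.neg_one_le_sin β) hsin (Real.sin_le_one α)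
end

section
/- Let u : ℝ → (0,∞) be continuous with u(x) = u(−x) for all x ∈ ℝ and liminf_{|x|→∞} u(x) = 0. Suppose that for every x ∈ ℝ, either u(y) ≥ u(2x − y) for all y ≥ x, or u(y) ≤ u(2x − y) for all y ≥ x. Then u is nonincreasing on [0, ∞). -/
/-!
Fix `x > 0`. If the reflection across `x` went the other way, i.e. `u (2x - y) ≤ u y` for
`y ≥ x`, then by evenness `u (y - 2x) ≤ u y` for `y ≥ x`, so `u` would stay above its (positive)
minimum over `[-x, x]` on all of `ℝ`, contradicting `liminf_{|x|→∞} u(x) = 0`. Hence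
`u y ≤ u (2x - y)` for `y ≥ x`, and for `0 ≤ a < b` the reflection across `(a + b) / 2`
gives `u b ≤ u a`.
-/

open Set

theorem le_of_forall_mem_Icc_le_of_le_sub {β : Type*} [Preorder β] {f : ℝ → β} {a p : ℝ}
    {m : β} (hp : 0 < p) (hbase : ∀ w ∈ Icc a (a + p), m ≤ f w)
    (hstep : ∀ w, a + p ≤ w → f (w - p) ≤ f w)
    {w : ℝ} (hw : a ≤ w) : m ≤ f w := by
  have hchain : ∀ n : ℕ, ∀ w, a ≤ w → w ≤ a + n * p → m ≤ f w := by
    intro n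
    induction n with
    | zero =>
      intro w h₁ h₂
      simp only [Nat.cast_zero, zero_mul, add_zero] at h₂
      exact hbase w ⟨h₁, by linarith⟩
    | succ n ih =>
      intro w h₁ h₂
      by_cases hwp : w ≤ a + p
      · exact hbase w ⟨h₁, hwp⟩
      · push_cast at h₂
        exact (ih (w - p) (by linarith) (by linarith)).trans (hstep w (by linarith))
  obtain ⟨n, hn⟩ := exists_nat_ge ((w - a) / p)
  exact hchain n w hw (by linarith [(div_le_iff₀ hp).mp hn])

theorem Function.Even.comp_abs {α β : Type*} [AddCommGroup α] [LinearOrder α] {f : α → β}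
    (hf : Function.Even f) (x : α) : f |x| = f x := by
  rcases abs_choice x with h | h <;> rw [h]
  exact hf x

theorem exists_pos_forall_le_of_le_reflect {u : ℝ → ℝ} (hpos : ∀ x, 0 < u x)
    (hcont : Continuous u) (heven : Function.Even u) {x : ℝ} (hx : 0 < x)
    (hrefl : ∀ y, x ≤ y → u (2 * x - y) ≤ u y) : ∃ m > 0, ∀ w, m ≤ u w := by
  obtain ⟨c, -, hmin⟩ := isCompact_Icc.exists_isMinOn
    (nonempty_Icc.2 (by linarith : -x ≤ x)) hcont.continuousOn
  refine ⟨u c, hpos c, fun w => ?_⟩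
  rw [← heven.comp_abs w]
  refine le_of_forall_mem_Icc_le_of_le_sub (a := -x) (p := 2 * x) (by positivity)
    (fun v hv => hmin ⟨hv.1, by linarith [hv.2]⟩) (fun v hv => ?_)
    (by linarith [abs_nonneg w])
  calc u (v - 2 * x) = u (2 * x - v) := by rw [← heven, neg_sub]
    _ ≤ u v := hrefl v (by linarith)

/-- A continuous, positive, even function `u` on `ℝ` with
`liminf_{|x|→∞} u(x) = 0` which is separable (for each reflection point `x`, one side
dominates the other under the reflection `y ↦ 2x − y`) is nonincreasing on `[0,∞)`. -/
theorem stmt_14 (u : ℝ → ℝ)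
    (hpos : ∀ x, 0 < u x)
    (hcont : Continuous u)
    (heven : ∀ x, u (-x) = u x)
    (hinf : ∀ ε > (0 : ℝ), ∀ M > (0 : ℝ), ∃ x : ℝ, M < |x| ∧ u x < ε)
    (hsep : ∀ x : ℝ,
      (∀ y, x ≤ y → u (2 * x - y) ≤ u y) ∨
      (∀ y, x ≤ y → u y ≤ u (2 * x - y))) :
    AntitoneOn u (Set.Ici 0) := by
  have hreflect : ∀ x, 0 < x → ∀ y, x ≤ y → u y ≤ u (2 * x - y) := by
    intro x hx
    refine (hsep x).resolve_left fun hrefl => ?_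
    obtain ⟨m, hm, hle⟩ := exists_pos_forall_le_of_le_reflect hpos hcont heven hx hrefl
    obtain ⟨z, -, hz⟩ := hinf m hm x hx
    exact (hle z).not_gt hz
  intro a (ha : 0 ≤ a) b _ hab
  rcases hab.eq_or_lt with rfl | hlt
  · rfl
  · have hmid : 2 * ((a + b) / 2) - b = a := by ring
    simpa only [hmid] using hreflect ((a + b) / 2) (by linarith) b (by linarith)
end
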